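/- arXiv:2412.09904 — 2 statements merged into one kernel-verified Lean document; each statement's English description precedes it below -/
import Mathlib

section
/- Let t ≥ 1 and consider the values ρ(r) = K_{2t}^{4t-1}(r) for 0 ≤ r ≤ 4t-1. Then the minimum value is ρ(1) = -C(4t-1, 2t)/(4t-1), i.e., K_{2t}^{4t-1}(r) ≥ -C(4t-1,2t)/(4t-1) for all 0 ≤ r ≤ 4t-1 with equality at r=1. -/
/-!
By the duality `C(n,r) K_ℓ(r) = C(n,ℓ) K_r(ℓ)` it suffices to know `K_r^{4t-1}(2t)`, the
coefficient of `x^r` in `(1-x)^{2t} (1+x)^{2t-1} = (1-x)(1-x²)^{2t-1}`, namely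
`(-1)^⌈r/2⌉ C(2t-1, ⌊r/2⌋)`. Where this sign is negative (forcing `1 ≤ r ≤ 4t-2`) the bound becomes
`(4t-1) C(2t-1, ⌊r/2⌋) ≤ C(4t-1, r)`. Writing `m = 2t-1`, both sides agree at `r = 1, 2`, their
ratio does not decrease under `r ↦ r + 2` up to `r = m + 1`, and the symmetry `r ↦ 2m+1-r` covers
the rest.
-/

/-- Binary Krawtchouk polynomial `K_ℓ^n(r) = ∑_{j=0}^ℓ (-1)^j C(r,j) C(n-r, ℓ-j)`. -/
def binKraw (n ℓ r : ℕ) : ℤ :=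
  ∑ j ∈ Finset.range (ℓ + 1), (-1 : ℤ) ^ j * (r.choose j) * ((n - r).choose (ℓ - j))

open Polynomial Finset

namespace Nat

theorem choose_mul_choose_sub_comm (n a b : ℕ) :
    n.choose a * (n - a).choose b = n.choose b * (n - b).choose a := by
  have ha := choose_mul (n := n) (le_add_right a b)
  have hb := choose_mul (n := n) (le_add_left b a)
  rw [Nat.add_sub_cancel_left] at ha
  rw [Nat.add_sub_cancel] at hb
  rw [← ha, ← hb, choose_symm_add]

theorem choose_mul_choose_mul_choose_sub_comm {n ℓ r j : ℕ} (hjr : j ≤ r) (hjℓ : j ≤ ℓ) :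
    n.choose r * r.choose j * (n - r).choose (ℓ - j) =
      n.choose ℓ * ℓ.choose j * (n - ℓ).choose (r - j) := by
  rw [choose_mul hjr, choose_mul hjℓ, mul_assoc, mul_assoc,
    show n - r = n - j - (r - j) by omega, show n - ℓ = n - j - (ℓ - j) by omega,
    choose_mul_choose_sub_comm]

theorem choose_mul_choose_half_succ_le {m r : ℕ} (hr : r + 1 ≤ m) :
    (2 * m + 1).choose r * m.choose (r / 2 + 1) ≤
      (2 * m + 1).choose (r + 2) * m.choose (r / 2) := by
  have hratio :
      (m - r / 2) * ((r + 1) * (r + 2)) ≤ (2 * m + 1 - r) * (2 * m + 1 - (r + 1)) * (r / 2 + 1) := by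
    obtain ⟨d, rfl⟩ : ∃ d, m = r + 1 + d := ⟨m - (r + 1), by omega⟩
    obtain ⟨k, rfl | rfl⟩ := even_or_odd' r
    · rw [show 2 * k + 1 + d - 2 * k / 2 = k + 1 + d by omega,
        show 2 * (2 * k + 1 + d) + 1 - 2 * k = 2 * k + 3 + 2 * d by omega,
        show 2 * (2 * k + 1 + d) + 1 - (2 * k + 1) = 2 * k + 2 + 2 * d by omega,
        show 2 * k / 2 = k by omega]
      exact (le_add_right _ (4 * (k + 1) * (k + 1 + d) * (d + 1))).trans_eq (by ring)
    · rw [show 2 * k + 1 + 1 + d - (2 * k + 1) / 2 = k + 2 + d by omega,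
        show 2 * (2 * k + 1 + 1 + d) + 1 - (2 * k + 1) = 2 * k + 4 + 2 * d by omega,
        show 2 * (2 * k + 1 + 1 + d) + 1 - (2 * k + 1 + 1) = 2 * k + 3 + 2 * d by omega,
        show (2 * k + 1) / 2 = k by omega]
      exact (le_add_right _ (4 * d * (k + 1) * (k + 2 + d))).trans_eq (by ring)
  set n := 2 * m + 1
  set k := r / 2
  have e1 : n.choose (r + 1) * (r + 1) = n.choose r * (n - r) := choose_succ_right_eq n r
  have e2 : n.choose (r + 2) * (r + 2) = n.choose (r + 1) * (n - (r + 1)) :=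
    choose_succ_right_eq n (r + 1)
  have e3 : m.choose (k + 1) * (k + 1) = m.choose k * (m - k) := choose_succ_right_eq m k
  refine le_of_mul_le_mul_right (a := (r + 1) * (r + 2) * (k + 1)) ?_ (by positivity)
  calc n.choose r * m.choose (k + 1) * ((r + 1) * (r + 2) * (k + 1))
      = n.choose r * m.choose k * ((m - k) * ((r + 1) * (r + 2))) := by
        linear_combination (n.choose r * ((r + 1) * (r + 2))) * e3
    _ ≤ n.choose r * m.choose k * ((n - r) * (n - (r + 1)) * (k + 1)) :=
        Nat.mul_le_mul_left _ hratio
    _ = n.choose (r + 2) * m.choose k * ((r + 1) * (r + 2) * (k + 1)) := by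
        linear_combination (m.choose k * (k + 1)) * ((r + 1) * e2.symm + (n - (r + 1)) * e1.symm)

theorem mul_choose_half_le_choose_succ {m r : ℕ} (hr : r ≤ m) :
    (2 * m + 1) * m.choose ((r + 1) / 2) ≤ (2 * m + 1).choose (r + 1) := by
  induction r using twoStepInduction with
  | zero => simp
  | one =>
    have h := add_one_mul_choose_eq (2 * m) 1
    rw [choose_one_right] at h
    norm_num [choose_one_right]
    linarith
  | more s ih _ =>
    have hpos : 0 < m.choose ((s + 1) / 2) := choose_pos (by omega)
    refine le_of_mul_le_mul_right ?_ hpos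
    rw [show (s + 2 + 1) / 2 = (s + 1) / 2 + 1 by omega]
    calc (2 * m + 1) * m.choose ((s + 1) / 2 + 1) * m.choose ((s + 1) / 2)
        = (2 * m + 1) * m.choose ((s + 1) / 2) * m.choose ((s + 1) / 2 + 1) := by ring
      _ ≤ (2 * m + 1).choose (s + 1) * m.choose ((s + 1) / 2 + 1) :=
          Nat.mul_le_mul_right _ (ih (by omega))
      _ ≤ (2 * m + 1).choose (s + 2 + 1) * m.choose ((s + 1) / 2) :=
          choose_mul_choose_half_succ_le (by omega)

theorem mul_choose_half_le_choose {m r : ℕ} (h₁ : 1 ≤ r) (h₂ : r ≤ 2 * m) :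
    (2 * m + 1) * m.choose (r / 2) ≤ (2 * m + 1).choose r := by
  rcases le_or_gt r (m + 1) with h | h
  · obtain ⟨s, rfl⟩ : ∃ s, r = s + 1 := ⟨r - 1, by omega⟩
    exact mul_choose_half_le_choose_succ (by omega)
  · rw [← choose_symm (show r ≤ 2 * m + 1 by omega), ← choose_symm (show r / 2 ≤ m by omega),
      show m - r / 2 = (2 * m + 1 - r - 1 + 1) / 2 by omega,
      show 2 * m + 1 - r = 2 * m + 1 - r - 1 + 1 by omega]
    exact mul_choose_half_le_choose_succ (by omega)

end Nat

theorem coeff_one_sub_X_pow (R : Type*) [CommRing R] (n k : ℕ) :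
    ((1 - X : R[X]) ^ n).coeff k = (-1) ^ k * n.choose k := by
  induction n generalizing k with
  | zero => cases k <;> simp [coeff_one]
  | succ n ih =>
    cases k with
    | zero => simp [pow_succ, ih]
    | succ k =>
      rw [pow_succ, mul_sub, mul_one, coeff_sub, coeff_mul_X, ih, ih, Nat.choose_succ_succ']
      push_cast
      ring

theorem coeff_one_sub_X_sq_pow (R : Type*) [CommRing R] (n k : ℕ) :
    ((1 - X ^ 2 : R[X]) ^ n).coeff k =
      if 2 ∣ k then (-1 : R) ^ (k / 2) * n.choose (k / 2) else 0 := by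
  have : (1 - X ^ 2 : R[X]) ^ n = expand R 2 ((1 - X) ^ n) := by simp
  rw [this, coeff_expand two_pos, coeff_one_sub_X_pow]

theorem binKraw_eq_coeff (n ℓ r : ℕ) :
    binKraw n ℓ r = ((1 - X : ℤ[X]) ^ r * (1 + X) ^ (n - r)).coeff ℓ := by
  rw [coeff_mul, Nat.sum_antidiagonal_eq_sum_range_succ_mk]
  simp only [coeff_one_sub_X_pow, coeff_one_add_X_pow]
  rfl

theorem binKraw_two_mul_add_one_succ (m r : ℕ) :
    binKraw (2 * m + 1) r (m + 1) = (-1) ^ ((r + 1) / 2) * m.choose (r / 2) := by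
  have hfactor : (1 - X : ℤ[X]) ^ (m + 1) * (1 + X) ^ (2 * m + 1 - (m + 1)) =
      (1 - X ^ 2) ^ m - X * (1 - X ^ 2) ^ m := by
    rw [show 2 * m + 1 - (m + 1) = m by omega, pow_succ,
      show (1 - X ^ 2 : ℤ[X]) = (1 - X) * (1 + X) by ring, mul_pow]
    ring
  rw [binKraw_eq_coeff, hfactor, coeff_sub]
  rcases r with _ | r
  · simp [coeff_one_sub_X_sq_pow]
  rw [coeff_X_mul, coeff_one_sub_X_sq_pow, coeff_one_sub_X_sq_pow]
  obtain ⟨k, rfl | rfl⟩ := Nat.even_or_odd' r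
  · rw [if_neg (by omega), if_pos (by omega), show (2 * k + 1 + 1) / 2 = k + 1 by omega,
      show 2 * k / 2 = k by omega, show (2 * k + 1) / 2 = k by omega]
    ring
  · rw [if_pos (by omega), if_neg (by omega), show (2 * k + 1 + 1 + 1) / 2 = k + 1 by omega,
      show (2 * k + 1 + 1) / 2 = k + 1 by omega]
    ring

theorem binKraw_eq_sum_range_min (n ℓ r : ℕ) :
    binKraw n ℓ r =
      ∑ j ∈ range (min r ℓ + 1), (-1 : ℤ) ^ j * r.choose j * (n - r).choose (ℓ - j) := by
  refine (sum_subset (range_subset_range.2 (by omega)) fun j hj hj' => ?_).symm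
  simp only [mem_range] at hj hj'
  simp [Nat.choose_eq_zero_of_lt (show r < j by omega)]

theorem choose_mul_binKraw_comm (n ℓ r : ℕ) :
    n.choose r * binKraw n ℓ r = n.choose ℓ * binKraw n r ℓ := by
  rw [binKraw_eq_sum_range_min, binKraw_eq_sum_range_min, min_comm, mul_sum, mul_sum]
  refine sum_congr rfl fun j hj => ?_
  have hj' : j ≤ r ∧ j ≤ ℓ := by simp only [mem_range] at hj; omega
  have h : (n.choose r * r.choose j * (n - r).choose (ℓ - j) : ℤ) =
      n.choose ℓ * ℓ.choose j * (n - ℓ).choose (r - j) := by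
    exact_mod_cast Nat.choose_mul_choose_mul_choose_sub_comm hj'.1 hj'.2
  linear_combination (-1 : ℤ) ^ j * h

theorem choose_mul_binKraw_two_mul_add_one (m r : ℕ) :
    (2 * m + 1).choose r * binKraw (2 * m + 1) (m + 1) r =
      (2 * m + 1).choose (m + 1) * ((-1) ^ ((r + 1) / 2) * m.choose (r / 2)) := by
  rw [choose_mul_binKraw_comm, binKraw_two_mul_add_one_succ]

theorem mul_binKraw_two_mul_add_one_one (m : ℕ) :
    (2 * m + 1 : ℕ) * binKraw (2 * m + 1) (m + 1) 1 = -(2 * m + 1).choose (m + 1) := by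
  simpa using choose_mul_binKraw_two_mul_add_one m 1

theorem neg_choose_le_mul_binKraw_two_mul_add_one {m r : ℕ} (hm : Odd m) (hr : r ≤ 2 * m + 1) :
    -((2 * m + 1).choose (m + 1) : ℤ) ≤ (2 * m + 1 : ℕ) * binKraw (2 * m + 1) (m + 1) r := by
  have hpos : (0 : ℤ) < (2 * m + 1).choose r := by exact_mod_cast Nat.choose_pos hr
  refine le_of_mul_le_mul_left ?_ hpos
  rw [mul_left_comm, choose_mul_binKraw_two_mul_add_one]
  rcases Nat.even_or_odd ((r + 1) / 2) with hs | hs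
  · rw [hs.neg_one_pow]
    calc _ ≤ (0 : ℤ) := by simp only [mul_neg, Left.neg_nonpos_iff]; positivity
      _ ≤ _ := by positivity
  · have hr' : 1 ≤ r ∧ r ≤ 2 * m := by
      obtain ⟨a, rfl⟩ := hm
      obtain ⟨b, hb⟩ := hs
      omega
    have hle : ((2 * m + 1 : ℕ) * m.choose (r / 2) : ℤ) ≤ (2 * m + 1).choose r := by
      exact_mod_cast Nat.mul_choose_half_le_choose hr'.1 hr'.2
    rw [hs.neg_one_pow]
    nlinarith [Int.natCast_nonneg ((2 * m + 1).choose (m + 1))]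

/-- The minimum of `K_{2t}^{4t-1}(r)` over `0 ≤ r ≤ 4t-1` is
`ρ(1) = -C(4t-1,2t)/(4t-1)`. -/
theorem binKraw_4t_sub_one_min (t : ℕ) (ht : 1 ≤ t) :
    (∀ r : ℕ, r ≤ 4 * t - 1 →
      ((binKraw (4 * t - 1) (2 * t) r : ℤ) : ℚ)
        ≥ -((4 * t - 1).choose (2 * t) : ℚ) / (4 * t - 1)) ∧
    ((binKraw (4 * t - 1) (2 * t) 1 : ℤ) : ℚ)
        = -((4 * t - 1).choose (2 * t) : ℚ) / (4 * t - 1) := by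
  obtain ⟨m, hm, h2t, h4t⟩ : ∃ m, Odd m ∧ 2 * t = m + 1 ∧ 4 * t - 1 = 2 * m + 1 :=
    ⟨2 * t - 1, ⟨t - 1, by omega⟩, by omega, by omega⟩
  have hden : (4 * t - 1 : ℚ) = ((2 * m + 1 : ℕ) : ℚ) := by
    rw [← h4t, Nat.cast_sub (by omega)]
    push_cast
    ring
  have hpos : (0 : ℚ) < (2 * m + 1 : ℕ) := by positivity
  rw [h2t, h4t, hden]
  refine ⟨fun r hr => ?_, ?_⟩
  · rw [ge_iff_le, div_le_iff₀ hpos]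
    exact_mod_cast (neg_choose_le_mul_binKraw_two_mul_add_one hm hr).trans_eq (mul_comm _ _)
  · rw [eq_div_iff hpos.ne']
    exact_mod_cast (mul_comm _ _).trans (mul_binKraw_two_mul_add_one_one m)
end

section
/- Let x, y ∈ F_2^n with Hamming distance d(x,y) = ℓ where ℓ ≥ n/2, set d = 2ℓ, extend x and y to F_2^d by appending zeros, and define d×d matrices P_x^α(i,j) = (1/d) ξ_d^{(i-j)α} (-1)^{x_i+x_j}, ξ_d = e^{2πi/d}, for 0 ≤ α ≤ d-1. Then Σ_{k=0}^{d-1} (-1)^{x_k+y_k} = 0 and consequently P_x^α P_y^α = 0 for every α. -/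
open Complex

/-- Hamming distance between binary vectors. -/
def hdist {n : ℕ} (x y : Fin n → ZMod 2) : ℕ :=
  (Finset.univ.filter (fun i => x i ≠ y i)).card

/-- Extension of a vector of `F_2^n` to `F_2^d` by appending zeros. -/
def extZero {n d : ℕ} (hnd : n ≤ d) (x : Fin n → ZMod 2) : Fin d → ZMod 2 :=
  fun i => if h : (i : ℕ) < n then x ⟨i, h⟩ else 0

/-- The `d×d` matrices `P_x^α(i,j) = (1/d) ξ_d^{(i-j)α} (-1)^{x_i+x_j}`,
where `ξ_d = e^{2πi/d}`. -/
noncomputable def projMat (d : ℕ) (x : Fin d → ZMod 2) (α : ℕ) :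
    Matrix (Fin d) (Fin d) ℂ :=
  Matrix.of fun i j =>
    (1 / d : ℂ) * Complex.exp (2 * Real.pi * Complex.I / d) ^ (((i : ℤ) - (j : ℤ)) * α)
      * (-1 : ℂ) ^ ((x i).val + (x j).val)

/-!
Padding by zeros keeps the Hamming distance `ℓ`, so in dimension `2ℓ` the two vectors differ in
exactly half of the coordinates and the signs `(-1)^(x_k + y_k)` cancel. In `P_x^α P_y^α` the
phases `ξ^((i-k)α) ξ^((k-j)α)` collapse to `ξ^((i-j)α)`, so every entry is a multiple of that
vanishing sign sum.
-/

lemma neg_one_pow_val_add {R : Type*} [Ring R] (a b : ZMod 2) :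
    (-1 : R) ^ (a.val + b.val) = if a = b then 1 else -1 := by
  have h : (-1 : ℤ) ^ (a.val + b.val) = if a = b then 1 else -1 := by
    revert a b; decide
  simpa [apply_ite (Int.cast : ℤ → R)] using congrArg (Int.cast : ℤ → R) h

open Finset in
lemma sum_neg_one_pow_val_add {R : Type*} [CommRing R] {d : ℕ} (x y : Fin d → ZMod 2) :
    ∑ k, (-1 : R) ^ ((x k).val + (y k).val) = d - 2 * hdist x y := by
  have hsplit : #{k | x k = y k} + hdist x y = d :=
    (card_filter_add_card_filter_not _).trans (card_fin d)
  have hd : (d : R) = #{k | x k = y k} + hdist x y := by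
    rw [← Nat.cast_add, hsplit]
  simp only [neg_one_pow_val_add, sum_ite, sum_const, nsmul_eq_mul]
  rw [hd, hdist]
  ring

lemma hdist_extZero {n d : ℕ} (hnd : n ≤ d) (x y : Fin n → ZMod 2) :
    hdist (extZero hnd x) (extZero hnd y) = hdist x y := by
  rw [hdist, hdist, ← Finset.card_map (Fin.castLEEmb hnd)]
  congr 1
  ext k
  simp only [Finset.mem_filter_univ, Finset.mem_map, Fin.castLEEmb_apply]
  by_cases hk : (k : ℕ) < n
  · obtain ⟨a, rfl⟩ : ∃ a : Fin n, Fin.castLE hnd a = k := ⟨⟨k, hk⟩, rfl⟩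
    simp [extZero, (Fin.castLE_injective hnd).eq_iff]
  · have : ∀ a : Fin n, Fin.castLE hnd a ≠ k := fun a h => hk (h ▸ a.isLt)
    simp [extZero, hk, this]

lemma projMat_mul_projMat_apply (d : ℕ) (x y : Fin d → ZMod 2) (α : ℕ) (i j : Fin d) :
    (projMat d x α * projMat d y α) i j =
      (1 / d : ℂ) ^ 2 * Complex.exp (2 * Real.pi * Complex.I / d) ^ (((i : ℤ) - (j : ℤ)) * α)
        * (-1 : ℂ) ^ (x i).val * (-1 : ℂ) ^ (y j).val
        * ∑ k, (-1 : ℂ) ^ ((x k).val + (y k).val) := by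
  set ξ := Complex.exp (2 * Real.pi * Complex.I / d)
  have hξ : ξ ≠ 0 := Complex.exp_ne_zero _
  simp only [Matrix.mul_apply, projMat, Matrix.of_apply, Finset.mul_sum]
  refine Finset.sum_congr rfl fun k _ => ?_
  have hexp : ((i : ℤ) - j) * α = ((i : ℤ) - k) * α + ((k : ℤ) - j) * α := by ring
  rw [hexp, zpow_add₀ hξ]
  ring

lemma projMat_mul_projMat_eq_zero {d : ℕ} {x y : Fin d → ZMod 2}
    (h : ∑ k, (-1 : ℂ) ^ ((x k).val + (y k).val) = 0) (α : ℕ) :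
    projMat d x α * projMat d y α = 0 := by
  ext i j
  rw [projMat_mul_projMat_apply, h, mul_zero, Matrix.zero_apply]

theorem projMat_orthogonal_of_hamming_adjacent_general (n ℓ : ℕ)
    (x y : Fin n → ZMod 2) (hxy : hdist x y = ℓ) (hnd : n ≤ 2 * ℓ) :
    (∑ k : Fin (2 * ℓ), (-1 : ℤ) ^ ((extZero hnd x k).val + (extZero hnd y k).val) = 0) ∧
    (∀ α : ℕ, α ≤ 2 * ℓ - 1 →
      projMat (2 * ℓ) (extZero hnd x) α * projMat (2 * ℓ) (extZero hnd y) α = 0) := by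
  refine ⟨?_, fun α _ => projMat_mul_projMat_eq_zero ?_ α⟩ <;>
  · rw [sum_neg_one_pow_val_add, hdist_extZero, hxy]
    push_cast
    ring

/-- If `d(x,y) = ℓ` with `ℓ ≥ n/2` and `d = 2ℓ`, then after extending `x, y`
by zeros, `∑_{k=0}^{d-1} (-1)^{x_k+y_k} = 0` and `P_x^α P_y^α = 0` for every
`0 ≤ α ≤ d-1`: the quantum chromatic number of `H_{n,ℓ}` is at most `2ℓ`. -/
theorem projMat_orthogonal_of_hamming_adjacent (n ℓ : ℕ) (hℓ : n ≤ 2 * ℓ)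
    (x y : Fin n → ZMod 2) (hxy : hdist x y = ℓ) (hnd : n ≤ 2 * ℓ) :
    (∑ k : Fin (2 * ℓ), (-1 : ℤ) ^ ((extZero hnd x k).val + (extZero hnd y k).val) = 0) ∧
    (∀ α : ℕ, α ≤ 2 * ℓ - 1 →
      projMat (2 * ℓ) (extZero hnd x) α * projMat (2 * ℓ) (extZero hnd y) α = 0) :=
  projMat_orthogonal_of_hamming_adjacent_general n ℓ x y hxy hnd
end
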